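/- Let C = C_1;D and C_2 be comparator networks on n channels such that C_1 and C_2 have the same depth and the graph representations G(C_1) and G(C_2) are isomorphic. If C is a sorting network, then there is a comparator network D' on n channels with the same depth as D such that C_2;D' is a sorting network. -/

import Mathlib

namespace SN

open scoped Classical

/-- A comparator on `n` channels: a pair of channels. -/
abbrev Comp (n : ℕ) := Fin n × Fin n

/-- A layer is a finite set of comparators. -/
abbrev Layer (n : ℕ) := Finset (Comp n)

/-- A comparator network is a sequence (list) of layers; its depth is the length. -/
abbrev Net (n : ℕ) := List (Layer n)

/-- Each channel is used by at most one comparator of the layer. -/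
def NoOverlap {n : ℕ} (L : Layer n) : Prop :=
  ∀ c ∈ L, ∀ c' ∈ L, c ≠ c' →
    c.1 ≠ c'.1 ∧ c.1 ≠ c'.2 ∧ c.2 ≠ c'.1 ∧ c.2 ≠ c'.2

/-- A (standard) layer: comparators `(i,j)` with `i < j`, channels pairwise disjoint. -/
def IsLayer {n : ℕ} (L : Layer n) : Prop :=
  (∀ c ∈ L, c.1 < c.2) ∧ NoOverlap L

/-- A generalized layer: comparators `(i,j)` with `i ≠ j` allowed in any order. -/
def IsGenLayer {n : ℕ} (L : Layer n) : Prop :=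
  (∀ c ∈ L, c.1 ≠ c.2) ∧ NoOverlap L

def IsNet {n : ℕ} (C : Net n) : Prop := ∀ L ∈ C, IsLayer L

def IsGenNet {n : ℕ} (C : Net n) : Prop := ∀ L ∈ C, IsGenLayer L

/-- Apply one layer to a Boolean vector: a comparator `(i,j)` puts the min
(`&&`) on channel `i` and the max (`||`) on channel `j`. -/
noncomputable def applyLayer {n : ℕ} (L : Layer n) (x : Fin n → Bool) : Fin n → Bool :=
  fun k =>
    if h1 : ∃ c ∈ L, c.1 = k then x h1.choose.1 && x h1.choose.2
    else if h2 : ∃ c ∈ L, c.2 = k then x h2.choose.1 || x h2.choose.2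
    else x k

/-- Run a comparator network on a Boolean input (layers applied in sequence). -/
noncomputable def run {n : ℕ} (C : Net n) (x : Fin n → Bool) : Fin n → Bool :=
  C.foldl (fun y L => applyLayer L y) x

/-- Ascendingly sorted Boolean vector. -/
def BSorted {n : ℕ} (x : Fin n → Bool) : Prop :=
  ∀ i j : Fin n, i ≤ j → x i ≤ x j

/-- A sorting network: a comparator network sorting every Boolean input. -/
def IsSortingNet {n : ℕ} (C : Net n) : Prop :=
  IsNet C ∧ ∀ x : Fin n → Bool, BSorted (run C x)

/-- The set of outputs of a network on all Boolean inputs. -/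
def outputs {n : ℕ} (C : Net n) : Set (Fin n → Bool) := Set.range (run C)

/-- Apply one layer to a vector of naturals. -/
noncomputable def applyLayerN {n : ℕ} (L : Layer n) (x : Fin n → ℕ) : Fin n → ℕ :=
  fun k =>
    if h1 : ∃ c ∈ L, c.1 = k then min (x h1.choose.1) (x h1.choose.2)
    else if h2 : ∃ c ∈ L, c.2 = k then max (x h2.choose.1) (x h2.choose.2)
    else x k

noncomputable def runN {n : ℕ} (C : Net n) (x : Fin n → ℕ) : Fin n → ℕ :=
  C.foldl (fun y L => applyLayerN L y) x

def NSorted {n : ℕ} (x : Fin n → ℕ) : Prop :=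
  ∀ i j : Fin n, i ≤ j → x i ≤ x j

/-- Permute the coordinates of a Boolean vector by `π` (channel `k`'s value
moves to channel `π k`). -/
def permVec {n : ℕ} (π : Equiv.Perm (Fin n)) (x : Fin n → Bool) : Fin n → Bool :=
  fun i => x (π.symm i)

/-- The image of a set of Boolean vectors under coordinate permutation by `π`. -/
def permSet {n : ℕ} (π : Equiv.Perm (Fin n)) (X : Set (Fin n → Bool)) :
    Set (Fin n → Bool) :=
  permVec π '' X

/-- The image `π(L)` of a layer under a permutation of channels. -/
def permLayer {n : ℕ} (π : Equiv.Perm (Fin n)) (L : Layer n) : Layer n :=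
  L.image fun c => (π c.1, π c.2)

/-- Channel `i` is used by some comparator of the layer `L`. -/
def usedIn {n : ℕ} (L : Layer n) (i : Fin n) : Prop := ∃ c ∈ L, c.1 = i ∨ c.2 = i

/-- Channels `i` and `j` are joined by a comparator of `L`. -/
def Joined {n : ℕ} (L : Layer n) (i j : Fin n) : Prop := (i, j) ∈ L ∨ (j, i) ∈ L

/-- `i` is the smaller channel of some comparator of `L` (a min-channel). -/
def MinChan {n : ℕ} (L : Layer n) (i : Fin n) : Prop := ∃ c ∈ L, c.1 = i

/-- `i` is the larger channel of some comparator of `L` (a max-channel). -/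
def MaxChan {n : ℕ} (L : Layer n) (i : Fin n) : Prop := ∃ c ∈ L, c.2 = i

/-- A two-layer network `[L1, L2]` is redundant if some comparator can be removed
so that the outputs of the result are a permutation of the original outputs. -/
def Redundant {n : ℕ} (L1 L2 : Layer n) : Prop :=
  ∃ π : Equiv.Perm (Fin n),
    (∃ c ∈ L1, outputs [L1.erase c, L2] = permSet π (outputs [L1, L2])) ∨
    (∃ c ∈ L2, outputs [L1, L2.erase c] = permSet π (outputs [L1, L2]))

/-- A two-layer network `[L1, L2]` is saturated if it is non-redundant and no
comparator on two channels unused in the second layer can be added to the second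
layer so as to make the output set a proper subset of a permutation of the
original output set. -/
def Saturated {n : ℕ} (L1 L2 : Layer n) : Prop :=
  ¬ Redundant L1 L2 ∧
  ¬ ∃ (c : Comp n) (π : Equiv.Perm (Fin n)),
      c.1 < c.2 ∧ ¬ usedIn L2 c.1 ∧ ¬ usedIn L2 c.2 ∧
      outputs [L1, insert c L2] ⊂ permSet π (outputs [L1, L2])

/-- Vertices of the graph representation of `C`: the comparators of `C`,
tagged with the index of the layer containing them. -/
def Vertex {n : ℕ} (C : Net n) := {p : ℕ × Comp n // p.2 ∈ C.getD p.1 ∅}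

/-- The channel carrying the min output (`b = false`, label 1) or max output
(`b = true`, label 2) of a comparator. -/
def outChan {n : ℕ} (c : Comp n) (b : Bool) : Fin n := if b then c.2 else c.1

/-- An edge with label `b` (1 for min, 2 for max) from comparator `u` to
comparator `v`: the corresponding output of `u` is an input of `v`, i.e. `v`
is the next comparator on that channel. -/
def Edge {n : ℕ} (C : Net n) (b : Bool) (u v : ℕ × Comp n) : Prop :=
  u.1 < v.1 ∧ (outChan u.2 b = v.2.1 ∨ outChan u.2 b = v.2.2) ∧
  ∀ m, u.1 < m → m < v.1 → ¬ usedIn (C.getD m ∅) (outChan u.2 b)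

/-- The graph representations of `C` and `D` are isomorphic: a bijection of
comparators preserving the labeled edges. -/
def GraphIso {n m : ℕ} (C : Net n) (D : Net m) : Prop :=
  ∃ f : Vertex C ≃ Vertex D,
    ∀ (b : Bool) (u v : Vertex C),
      Edge C b u.val v.val ↔ Edge D b (f u).val (f v).val

/-- The graph representation of `C` is connected. -/
def GraphConnected {n : ℕ} (C : Net n) : Prop :=
  ∀ u v : Vertex C,
    Relation.ReflTransGen
      (fun a b : Vertex C => ∃ ℓ : Bool, Edge C ℓ a.val b.val ∨ Edge C ℓ b.val a.val) u v

/-- Reflection of a comparator: `(i,j) ↦ (n-j+1, n-i+1)` (in 1-based terms). -/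
def reflectComp {n : ℕ} (c : Comp n) : Comp n := (c.2.rev, c.1.rev)

def reflectLayer {n : ℕ} (L : Layer n) : Layer n := L.image reflectComp

/-- Reflection `C^R` of a comparator network. -/
def reflect {n : ℕ} (C : Net n) : Net n := C.map reflectLayer

/-- The first layer `F_n = {(2i-1, 2i) : 1 ≤ i ≤ ⌊n/2⌋}` (0-indexed: `(2i, 2i+1)`). -/
def FLayer (n : ℕ) : Layer n :=
  Finset.univ.filter fun c : Comp n => c.1.val % 2 = 0 ∧ c.2.val = c.1.val + 1

/-- The two-layer networks with first layer `F_n`, parametrized by second layer. -/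
def SecondLayers (n : ℕ) := {L : Layer n // IsLayer L}

/-- The number `|R(G_n)|` of equivalence classes of two-layer networks with
first layer `F_n`, under graph isomorphism `≈`. -/
noncomputable def numClasses (n : ℕ) : ℕ :=
  Nat.card (Quot fun L L' : SecondLayers n =>
    GraphIso ([FLayer n, L.val] : Net n) ([FLayer n, L'.val] : Net n))

/-- Redundant two-layer networks with first layer `F_n`. -/
def RedLayers (n : ℕ) := {L : Layer n // IsLayer L ∧ Redundant (FLayer n) L}

/-- The number of equivalence classes of redundant two-layer networks with
first layer `F_n`, under graph isomorphism `≈`. -/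
noncomputable def numRedClasses (n : ℕ) : ℕ :=
  Nat.card (Quot fun L L' : RedLayers n =>
    GraphIso ([FLayer n, L.val] : Net n) ([FLayer n, L'.val] : Net n))

/-!
An isomorphism `f` of graph representations matches the incoming edges of `u` with those of
`f u`, so the two comparators read equally many channels straight from the network input.
Choosing a map `g` of input channels that matches these, induction along the edges shows that
`f u` computes on `x` what `u` computes on `x ∘ g`. Reading the outputs off the comparator
outputs without outgoing edge, `C₂` computes `x ↦ C₁ (x ∘ g)` up to a permutation `π` of
the output channels. Hence `C₂;π(D)` outputs sorted vectors up to a fixed permutation;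
`π(D)` is a generalized network, which is straightened layer by layer into a standard
network `D'` of the same depth, and a count of sorted vectors shows that `C₂;D'` sorts.
-/

variable {n : ℕ}

lemma IsLayer.isGenLayer {L : Layer n} (h : IsLayer L) : IsGenLayer L :=
  ⟨fun c hc => (h.1 c hc).ne, h.2⟩

lemma IsNet.isGenNet {C : Net n} (h : IsNet C) : IsGenNet C :=
  fun L hL => (h L hL).isGenLayer

lemma IsGenLayer.eq_of_mem {L : Layer n} (hL : IsGenLayer L) {c c' : Comp n} (hc : c ∈ L)
    (hc' : c' ∈ L) {i : Fin n} (h : c.1 = i ∨ c.2 = i) (h' : c'.1 = i ∨ c'.2 = i) :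
    c = c' := by
  by_contra hne
  obtain ⟨h11, h12, h21, h22⟩ := hL.2 c hc c' hc' hne
  rcases h with h | h <;> rcases h' with h' | h' <;> simp_all

lemma applyLayer_congr {L L' : Layer n} {k : Fin n}
    (h : ∀ c : Comp n, c.1 = k ∨ c.2 = k → (c ∈ L ↔ c ∈ L')) (x : Fin n → Bool) :
    applyLayer L x k = applyLayer L' x k := by
  have h₁ : ∀ c : Comp n, c ∈ L ∧ c.1 = k ↔ c ∈ L' ∧ c.1 = k :=
    fun c => and_congr_left fun hc => h c (Or.inl hc)
  have h₂ : ∀ c : Comp n, c ∈ L ∧ c.2 = k ↔ c ∈ L' ∧ c.2 = k :=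
    fun c => and_congr_left fun hc => h c (Or.inr hc)
  simp only [applyLayer, h₁, h₂]

lemma applyLayer_fst {L : Layer n} (hL : IsGenLayer L) {c : Comp n} (hc : c ∈ L)
    (x : Fin n → Bool) : applyLayer L x c.1 = (x c.1 && x c.2) := by
  have h : ∃ d ∈ L, d.1 = c.1 := ⟨c, hc, rfl⟩
  rw [applyLayer, dif_pos h, hL.eq_of_mem h.choose_spec.1 hc (Or.inl h.choose_spec.2) (Or.inl rfl)]

lemma applyLayer_snd {L : Layer n} (hL : IsGenLayer L) {c : Comp n} (hc : c ∈ L)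
    (x : Fin n → Bool) : applyLayer L x c.2 = (x c.1 || x c.2) := by
  have h₁ : ¬ ∃ d ∈ L, d.1 = c.2 := by
    rintro ⟨d, hd, hdc⟩
    obtain rfl := hL.eq_of_mem hd hc (Or.inl hdc) (Or.inr rfl)
    exact hL.1 d hc hdc
  have h₂ : ∃ d ∈ L, d.2 = c.2 := ⟨c, hc, rfl⟩
  rw [applyLayer, dif_neg h₁, dif_pos h₂,
    hL.eq_of_mem h₂.choose_spec.1 hc (Or.inr h₂.choose_spec.2) (Or.inr rfl)]

lemma applyLayer_of_not_usedIn {L : Layer n} {k : Fin n} (h : ¬ usedIn L k)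
    (x : Fin n → Bool) : applyLayer L x k = x k := by
  have h₁ : ¬ ∃ c ∈ L, c.1 = k := fun ⟨c, hc, e⟩ => h ⟨c, hc, Or.inl e⟩
  have h₂ : ¬ ∃ c ∈ L, c.2 = k := fun ⟨c, hc, e⟩ => h ⟨c, hc, Or.inr e⟩
  rw [applyLayer, dif_neg h₁, dif_neg h₂]

lemma run_cons (L : Layer n) (C : Net n) (x : Fin n → Bool) :
    run (L :: C) x = run C (applyLayer L x) := rfl

lemma run_append (A B : Net n) (x : Fin n → Bool) :
    run (A ++ B) x = run B (run A x) := by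
  simp [run, List.foldl_append]

lemma permVec_apply (π : Equiv.Perm (Fin n)) (x : Fin n → Bool) (i : Fin n) :
    permVec π x (π i) = x i := by
  simp [permVec]

lemma permVec_mul (π τ : Equiv.Perm (Fin n)) (x : Fin n → Bool) :
    permVec π (permVec τ x) = permVec (π * τ) x := by
  funext i
  simp [permVec, Equiv.Perm.mul_def]

lemma permVec_injective (π : Equiv.Perm (Fin n)) : Function.Injective (permVec π) := by
  intro y z h
  funext i
  simpa [permVec] using congrFun h (π i)

lemma IsGenLayer.permLayer {L : Layer n} (hL : IsGenLayer L) (π : Equiv.Perm (Fin n)) :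
    IsGenLayer (permLayer π L) := by
  refine ⟨fun d hd => ?_, fun d hd d' hd' hne => ?_⟩
  · obtain ⟨c, hc, rfl⟩ := Finset.mem_image.1 hd
    exact π.injective.ne (hL.1 c hc)
  · obtain ⟨c, hc, rfl⟩ := Finset.mem_image.1 hd
    obtain ⟨c', hc', rfl⟩ := Finset.mem_image.1 hd'
    obtain ⟨h11, h12, h21, h22⟩ := hL.2 c hc c' hc' (by rintro rfl; exact hne rfl)
    simp [π.injective.ne, *]

lemma applyLayer_permLayer {L : Layer n} (hL : IsGenLayer L) (π : Equiv.Perm (Fin n))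
    (x : Fin n → Bool) :
    applyLayer (permLayer π L) (permVec π x) = permVec π (applyLayer L x) := by
  funext k
  obtain ⟨k, rfl⟩ := π.surjective k
  have hmem : ∀ c ∈ L, ((π c.1, π c.2) : Comp n) ∈ permLayer π L :=
    fun c hc => Finset.mem_image_of_mem _ hc
  by_cases hk : usedIn L k
  · obtain ⟨c, hc, rfl | rfl⟩ := hk
    · rw [permVec_apply, applyLayer_fst hL hc, applyLayer_fst (hL.permLayer π) (hmem c hc),
        permVec_apply, permVec_apply]
    · rw [permVec_apply, applyLayer_snd hL hc, applyLayer_snd (hL.permLayer π) (hmem c hc),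
        permVec_apply, permVec_apply]
  · have hk' : ¬ usedIn (permLayer π L) (π k) := by
      simp only [usedIn, SN.permLayer, Finset.mem_image] at hk ⊢
      rintro ⟨_, ⟨c, hc, rfl⟩, h⟩
      exact hk ⟨c, hc, by simpa using h⟩
    rw [applyLayer_of_not_usedIn hk', permVec_apply, permVec_apply,
      applyLayer_of_not_usedIn hk]

def permNet (π : Equiv.Perm (Fin n)) (C : Net n) : Net n := C.map (permLayer π)

lemma IsGenNet.permNet {C : Net n} (hC : IsGenNet C) (π : Equiv.Perm (Fin n)) :
    IsGenNet (permNet π C) := by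
  simp only [IsGenNet, SN.permNet, List.mem_map]
  rintro _ ⟨L, hL, rfl⟩
  exact (hC L hL).permLayer π

lemma run_permNet {C : Net n} (hC : IsGenNet C) (π : Equiv.Perm (Fin n)) (x : Fin n → Bool) :
    run (permNet π C) (permVec π x) = permVec π (run C x) := by
  induction C generalizing x with
  | nil => rfl
  | cons L T ih =>
    rw [permNet, List.map_cons, run_cons, run_cons,
      applyLayer_permLayer (hC L List.mem_cons_self),
      ← ih (fun M hM => hC M (List.mem_cons_of_mem _ hM))]
    rfl

def flipComp (L : Layer n) (c : Comp n) : Layer n := insert c.swap (L.erase c)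

lemma IsGenLayer.flipComp {L : Layer n} (hL : IsGenLayer L) {c : Comp n} (hc : c ∈ L) :
    IsGenLayer (flipComp L c) := by
  have hmem : ∀ d ∈ SN.flipComp L c, d = c.swap ∨ (d ∈ L ∧ d ≠ c) := by
    simp only [SN.flipComp, Finset.mem_insert, Finset.mem_erase]
    tauto
  refine ⟨fun d hd => ?_, fun d hd d' hd' hne => ?_⟩
  · rcases hmem d hd with rfl | ⟨hd, -⟩
    · exact (hL.1 c hc).symm
    · exact hL.1 d hd
  rcases hmem d hd with rfl | ⟨hd, hdc⟩ <;> rcases hmem d' hd' with rfl | ⟨hd', hd'c⟩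
  · exact absurd rfl hne
  · obtain ⟨h11, h12, h21, h22⟩ := hL.2 c hc d' hd' (Ne.symm hd'c)
    exact ⟨h21, h22, h11, h12⟩
  · obtain ⟨h11, h12, h21, h22⟩ := hL.2 d hd c hc hdc
    exact ⟨h12, h11, h22, h21⟩
  · exact hL.2 d hd d' hd' hne

lemma applyLayer_flipComp {L : Layer n} (hL : IsGenLayer L) {c : Comp n} (hc : c ∈ L)
    (x : Fin n → Bool) :
    applyLayer (flipComp L c) x = permVec (Equiv.swap c.1 c.2) (applyLayer L x) := by
  have hswap : c.swap ∈ flipComp L c := Finset.mem_insert_self _ _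
  funext k
  simp only [permVec, Equiv.symm_swap]
  by_cases h₂ : k = c.2
  · subst h₂
    rw [Equiv.swap_apply_right, applyLayer_fst hL hc,
      show c.2 = c.swap.1 from rfl, applyLayer_fst (hL.flipComp hc) hswap, Bool.and_comm]
    rfl
  by_cases h₁ : k = c.1
  · subst h₁
    rw [Equiv.swap_apply_left, applyLayer_snd hL hc,
      show c.1 = c.swap.2 from rfl, applyLayer_snd (hL.flipComp hc) hswap, Bool.or_comm]
    rfl
  rw [Equiv.swap_apply_of_ne_of_ne h₁ h₂]
  refine applyLayer_congr (fun d hd => ?_) x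
  have hdc : d ≠ c := by rintro rfl; tauto
  have hdc' : d ≠ c.swap := by rintro rfl; simp only [Prod.fst_swap, Prod.snd_swap] at hd; tauto
  simp [SN.flipComp, hdc, hdc']

lemma exists_isLayer_applyLayer_eq {L : Layer n} (hL : IsGenLayer L) :
    ∃ (L' : Layer n) (ρ : Equiv.Perm (Fin n)), IsLayer L' ∧
      ∀ x, applyLayer L' x = permVec ρ (applyLayer L x) := by
  induction hk : (L.filter fun c => c.2 < c.1).card generalizing L with
  | zero =>
    refine ⟨L, 1, ⟨fun c hc => ?_, hL.2⟩, fun x => rfl⟩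
    have : c ∉ L.filter fun c => c.2 < c.1 := by simp [Finset.card_eq_zero.1 hk]
    simp only [Finset.mem_filter, not_and, not_lt] at this
    exact (this hc).lt_of_ne (hL.1 c hc)
  | succ k ih =>
    obtain ⟨c, hc⟩ : (L.filter fun c => c.2 < c.1).Nonempty := by
      rw [← Finset.card_pos, hk]; omega
    obtain ⟨hcL, hrev⟩ := Finset.mem_filter.1 hc
    have hk' : ((flipComp L c).filter fun c => c.2 < c.1).card = k := by
      rw [flipComp, Finset.filter_insert, if_neg (by simp [hrev.le]), Finset.filter_erase,
        Finset.card_erase_of_mem hc, hk, Nat.add_sub_cancel]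
    obtain ⟨L', ρ, hL', hρ⟩ := ih (hL.flipComp hcL) hk'
    exact ⟨L', ρ * Equiv.swap c.1 c.2, hL', fun x => by
      rw [hρ, applyLayer_flipComp hL hcL, permVec_mul]⟩

lemma IsGenNet.exists_isNet {E : Net n} (hE : IsGenNet E) :
    ∃ (E' : Net n) (ρ : Equiv.Perm (Fin n)), IsNet E' ∧ E'.length = E.length ∧
      ∀ x, run E' x = permVec ρ (run E x) := by
  induction E using List.reverseRecOn with
  | nil => exact ⟨[], 1, fun _ h => absurd h List.not_mem_nil, rfl, fun _ => rfl⟩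
  | append_singleton T L ih =>
    obtain ⟨T', ρ, hT', hlen, hρ⟩ :=
      ih fun M hM => hE M (List.mem_append_left _ hM)
    have hL : IsGenLayer L := hE L (List.mem_append_right _ (List.mem_singleton_self L))
    obtain ⟨L', ρ', hL', hρ'⟩ := exists_isLayer_applyLayer_eq (hL.permLayer ρ)
    refine ⟨T' ++ [L'], ρ' * ρ, fun M hM => ?_, by simp [hlen], fun x => ?_⟩
    · rcases List.mem_append.1 hM with hM | hM
      · exact hT' M hM
      · rwa [List.mem_singleton.1 hM]
    · simp only [run_append, run_cons, hρ, hρ', applyLayer_permLayer hL, permVec_mul]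
      rfl

lemma applyLayer_of_bSorted {L : Layer n} (hL : IsLayer L) {x : Fin n → Bool}
    (hx : BSorted x) : applyLayer L x = x := by
  funext k
  by_cases hk : usedIn L k
  · obtain ⟨c, hc, rfl | rfl⟩ := hk <;>
      have hle := hx c.1 c.2 (hL.1 c hc).le <;> revert hle
    · rw [applyLayer_fst hL.isGenLayer hc]
      cases x c.1 <;> cases x c.2 <;> decide
    · rw [applyLayer_snd hL.isGenLayer hc]
      cases x c.1 <;> cases x c.2 <;> decide
  · exact applyLayer_of_not_usedIn hk x

lemma run_of_bSorted {C : Net n} (hC : IsNet C) {x : Fin n → Bool} (hx : BSorted x) :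
    run C x = x := by
  induction C with
  | nil => rfl
  | cons L T ih =>
    rw [run_cons, applyLayer_of_bSorted (hC L List.mem_cons_self) hx]
    exact ih fun M hM => hC M (List.mem_cons_of_mem _ hM)

/-- Networks fix sorted vectors, so `permVec σ` maps the finite set of sorted vectors into,
hence onto, itself. -/
lemma isSortingNet_of_forall_run_eq_permVec {C : Net n} (hC : IsNet C)
    (σ : Equiv.Perm (Fin n)) (h : ∀ x, ∃ y, BSorted y ∧ run C x = permVec σ y) :
    IsSortingNet C := by
  set S : Set (Fin n → Bool) := {y | BSorted y}
  have hS : S ⊆ permVec σ '' S := fun y hy => by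
    obtain ⟨z, hz, hyz⟩ := h y
    exact ⟨z, hz, by rw [← hyz, run_of_bSorted hC hy]⟩
  have hσS : permVec σ '' S = S :=
    (Set.eq_of_subset_of_ncard_le hS
      (Set.ncard_image_of_injective _ (permVec_injective σ)).le (Set.toFinite _)).symm
  refine ⟨hC, fun x => ?_⟩
  obtain ⟨y, hy, hxy⟩ := h x
  have hmem : permVec σ y ∈ S := hσS ▸ ⟨y, hy, rfl⟩
  rw [hxy]
  exact hmem

noncomputable def stateAt (C : Net n) (t : ℕ) (x : Fin n → Bool) : Fin n → Bool :=
  run (C.take t) x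

def UsedAt (C : Net n) (t : ℕ) (i : Fin n) : Prop := usedIn (C.getD t ∅) i

def Used (C : Net n) (i : Fin n) : Prop := ∃ t, UsedAt C t i

noncomputable def outVal (C : Net n) (x : Fin n → Bool) (p : ℕ × Comp n) (b : Bool) : Bool :=
  stateAt C (p.1 + 1) x (outChan p.2 b)

noncomputable def chans (p : ℕ × Comp n) : Finset (Fin n) := {p.2.1, p.2.2}

section Dataflow

variable {C : Net n}

lemma UsedAt.lt_length {t : ℕ} {i : Fin n} (h : UsedAt C t i) : t < C.length := by
  by_contra hc
  obtain ⟨c, hc', -⟩ := h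
  rw [List.getD_eq_default _ _ (not_lt.1 hc)] at hc'
  exact Finset.notMem_empty _ hc'

lemma Vertex.layer_lt (u : Vertex C) : u.val.1 < C.length := by
  by_contra hc
  have hu := u.prop
  rw [List.getD_eq_default _ _ (not_lt.1 hc)] at hu
  exact Finset.notMem_empty _ hu

lemma getD_mem {t : ℕ} (h : t < C.length) : C.getD t ∅ ∈ C := by
  rw [List.getD_eq_getElem _ _ h]
  exact List.getElem_mem h

lemma IsGenNet.layer (hC : IsGenNet C) (u : Vertex C) :
    IsGenLayer (C.getD u.val.1 ∅) :=
  hC _ (getD_mem u.layer_lt)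

lemma mem_chans {p : ℕ × Comp n} {i : Fin n} : i ∈ chans p ↔ p.2.1 = i ∨ p.2.2 = i := by
  simp [chans, eq_comm]

lemma outChan_mem_chans (p : ℕ × Comp n) (b : Bool) : outChan p.2 b ∈ chans p := by
  cases b <;> simp [outChan, chans]

lemma Vertex.usedAt_of_mem_chans (u : Vertex C) {i : Fin n} (hi : i ∈ chans u.val) :
    UsedAt C u.val.1 i :=
  ⟨u.val.2, u.prop, mem_chans.1 hi⟩

lemma Vertex.usedAt_outChan (u : Vertex C) (b : Bool) :
    UsedAt C u.val.1 (outChan u.val.2 b) :=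
  u.usedAt_of_mem_chans (outChan_mem_chans _ b)

lemma stateAt_succ {t : ℕ} (h : t < C.length) (x : Fin n → Bool) :
    stateAt C (t + 1) x = applyLayer (C.getD t ∅) (stateAt C t x) := by
  rw [stateAt, stateAt, List.take_add_one, run_append, List.getElem?_eq_getElem h,
    List.getD_eq_getElem _ _ h]
  rfl

lemma stateAt_of_length_le {t : ℕ} (h : C.length ≤ t) (x : Fin n → Bool) :
    stateAt C t x = run C x := by
  rw [stateAt, List.take_of_length_le h]

lemma stateAt_eq_of_forall_not_usedAt {i : Fin n} {t t' : ℕ} (htt : t ≤ t')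
    (h : ∀ s, t ≤ s → s < t' → ¬ UsedAt C s i) (x : Fin n → Bool) :
    stateAt C t' x i = stateAt C t x i := by
  induction t', htt using Nat.le_induction with
  | base => rfl
  | succ t' ht' ih =>
    rw [← ih fun s hs hs' => h s hs (by omega)]
    by_cases hlt : t' < C.length
    · rw [stateAt_succ hlt, applyLayer_of_not_usedIn (h t' ht' (by omega))]
    · rw [stateAt_of_length_le (by omega), stateAt_of_length_le (not_lt.1 hlt)]

lemma run_of_not_used {i : Fin n} (h : ¬ Used C i) (x : Fin n → Bool) : run C x i = x i := by
  rw [← stateAt_of_length_le le_rfl x]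
  exact stateAt_eq_of_forall_not_usedAt (Nat.zero_le _) (fun s _ _ hs => h ⟨s, hs⟩) x

lemma outVal_false (hC : IsGenNet C) (u : Vertex C) (x : Fin n → Bool) :
    outVal C x u.val false =
      (stateAt C u.val.1 x u.val.2.1 && stateAt C u.val.1 x u.val.2.2) := by
  rw [outVal, stateAt_succ u.layer_lt]
  exact applyLayer_fst (hC.layer u) u.prop _

lemma outVal_true (hC : IsGenNet C) (u : Vertex C) (x : Fin n → Bool) :
    outVal C x u.val true =
      (stateAt C u.val.1 x u.val.2.1 || stateAt C u.val.1 x u.val.2.2) := by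
  rw [outVal, stateAt_succ u.layer_lt]
  exact applyLayer_snd (hC.layer u) u.prop _

lemma outVal_eq_of_image_eq {D : Net n} (hC : IsGenNet C) (hD : IsGenNet D) (u : Vertex C)
    (v : Vertex D) {x y : Fin n → Bool}
    (h : (chans u.val).image (stateAt C u.val.1 x) = (chans v.val).image (stateAt D v.val.1 y))
    (b : Bool) : outVal C x u.val b = outVal D y v.val b := by
  have key : ∀ a₁ a₂ c₁ c₂ : Bool, ({a₁, a₂} : Finset Bool) = {c₁, c₂} →
      (a₁ && a₂) = (c₁ && c₂) ∧ (a₁ || a₂) = (c₁ || c₂) := by decide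
  simp only [chans, Finset.image_insert, Finset.image_singleton] at h
  cases b
  · rw [outVal_false hC, outVal_false hD, (key _ _ _ _ h).1]
  · rw [outVal_true hC, outVal_true hD, (key _ _ _ _ h).2]

lemma Edge.stateAt_eq {w v : ℕ × Comp n} {b : Bool} (he : Edge C b w v) (x : Fin n → Bool) :
    stateAt C v.1 x (outChan w.2 b) = outVal C x w b :=
  stateAt_eq_of_forall_not_usedAt he.1 he.2.2 x

lemma Edge.outChan_mem_chans {w v : ℕ × Comp n} {b : Bool} (he : Edge C b w v) :
    outChan w.2 b ∈ chans v :=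
  mem_chans.2 (he.2.1.imp Eq.symm Eq.symm)

lemma exists_lastUse {t : ℕ} {i : Fin n} (h : ∃ s < t, UsedAt C s i) :
    ∃ (w : Vertex C) (b : Bool), outChan w.val.2 b = i ∧ w.val.1 < t ∧
      ∀ s, w.val.1 < s → s < t → ¬ UsedAt C s i := by
  obtain ⟨s, hst, hs⟩ := h
  set s₀ := Nat.findGreatest (fun s => UsedAt C s i) (t - 1)
  have hs₀ : UsedAt C s₀ i := Nat.findGreatest_spec (P := fun s => UsedAt C s i) (by omega) hs
  have hs₀t : s₀ < t := by
    have := Nat.findGreatest_le (P := fun s => UsedAt C s i) (t - 1); omega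
  obtain ⟨c, hc, hci⟩ := hs₀
  refine ⟨⟨(s₀, c), hc⟩, !decide (c.1 = i), ?_, hs₀t, fun s hs hst =>
    Nat.findGreatest_is_greatest hs (by omega)⟩
  by_cases h₁ : c.1 = i
  · simp [outChan, h₁]
  · simpa [outChan, h₁] using hci.resolve_left h₁

lemma eq_of_lastUse (hC : IsGenNet C) {w w' : Vertex C} {b b' : Bool} {t : ℕ} {i : Fin n}
    (ho : outChan w.val.2 b = i) (ho' : outChan w'.val.2 b' = i)
    (hlt : w.val.1 < t) (hlt' : w'.val.1 < t)
    (hgap : ∀ s, w.val.1 < s → s < t → ¬ UsedAt C s i)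
    (hgap' : ∀ s, w'.val.1 < s → s < t → ¬ UsedAt C s i) :
    w = w' ∧ b = b' := by
  have hu := ho ▸ w.usedAt_outChan b
  have hu' := ho' ▸ w'.usedAt_outChan b'
  have hlayer : w.val.1 = w'.val.1 := by
    rcases lt_trichotomy w.val.1 w'.val.1 with h | h | h
    · exact absurd hu' (hgap _ h hlt')
    · exact h
    · exact absurd hu (hgap' _ h hlt)
  have hw' : w'.val.2 ∈ C.getD w.val.1 ∅ := hlayer ▸ w'.prop
  have hcomp : w.val.2 = w'.val.2 := (hC.layer w).eq_of_mem w.prop hw'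
    (mem_chans.1 (ho ▸ outChan_mem_chans w.val b))
    (mem_chans.1 (ho' ▸ outChan_mem_chans w'.val b'))
  have hww' : w = w' := Subtype.ext (Prod.ext hlayer hcomp)
  subst hww'
  refine ⟨rfl, ?_⟩
  have hne := (hC.layer w).1 _ w.prop
  cases b <;> cases b' <;> simp_all [outChan]

def IsSink (C : Net n) (w : ℕ × Comp n) (b : Bool) : Prop :=
  ∀ s, w.1 < s → ¬ UsedAt C s (outChan w.2 b)

lemma exists_edge_of_usedAt {w : ℕ × Comp n} {b : Bool} {s : ℕ} (hs : w.1 < s)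
    (hu : UsedAt C s (outChan w.2 b)) : ∃ v : Vertex C, Edge C b w v.val := by
  have h : ∃ m, w.1 < m ∧ UsedAt C m (outChan w.2 b) := ⟨s, hs, hu⟩
  obtain ⟨hlt, c, hc, hci⟩ := Nat.find_spec h
  exact ⟨⟨(Nat.find h, c), hc⟩, hlt, hci.imp Eq.symm Eq.symm,
    fun m hm hm' hmu => Nat.find_min h hm' ⟨hm, hmu⟩⟩

lemma isSink_iff_forall_not_edge (w : ℕ × Comp n) (b : Bool) :
    IsSink C w b ↔ ∀ v : Vertex C, ¬ Edge C b w v.val := by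
  refine ⟨fun h v he => h v.val.1 he.1 (v.usedAt_of_mem_chans he.outChan_mem_chans),
    fun h s hs hu => ?_⟩
  obtain ⟨v, hv⟩ := exists_edge_of_usedAt hs hu
  exact h v hv

end Dataflow

noncomputable def srcChans (C : Net n) (p : ℕ × Comp n) : Finset (Fin n) :=
  (chans p).filter fun i => ∀ s < p.1, ¬ UsedAt C s i

def SinkSlot (C : Net n) := {s : Vertex C × Bool // IsSink C s.1.val s.2}

def InSlot (C : Net n) (v : ℕ × Comp n) := {s : Vertex C × Bool // Edge C s.2 s.1.val v}

section Slots

variable {C : Net n}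

lemma srcChans_subset_chans (C : Net n) (p : ℕ × Comp n) : srcChans C p ⊆ chans p :=
  Finset.filter_subset _ _

lemma card_chans (hC : IsGenNet C) (u : Vertex C) : (chans u.val).card = 2 :=
  Finset.card_pair ((hC.layer u).1 _ u.prop)

lemma stateAt_of_mem_srcChans {p : ℕ × Comp n} {i : Fin n} (h : i ∈ srcChans C p)
    (x : Fin n → Bool) : stateAt C p.1 x i = x i :=
  stateAt_eq_of_forall_not_usedAt (Nat.zero_le _)
    (fun s _ hs => (Finset.mem_filter.1 h).2 s hs) x

lemma Vertex.used_of_mem_srcChans (u : Vertex C) {i : Fin n} (h : i ∈ srcChans C u.val) :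
    Used C i :=
  ⟨u.val.1, u.usedAt_of_mem_chans (srcChans_subset_chans C _ h)⟩

lemma eq_of_mem_srcChans (hC : IsGenNet C) {u u' : Vertex C} {i : Fin n}
    (h : i ∈ srcChans C u.val) (h' : i ∈ srcChans C u'.val) : u = u' := by
  obtain ⟨hi, hfirst⟩ := Finset.mem_filter.1 h
  obtain ⟨hi', hfirst'⟩ := Finset.mem_filter.1 h'
  have hlayer : u.val.1 = u'.val.1 := by
    rcases lt_trichotomy u.val.1 u'.val.1 with hlt | heq | hlt
    · exact absurd (u.usedAt_of_mem_chans hi) (hfirst' _ hlt)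
    · exact heq
    · exact absurd (u'.usedAt_of_mem_chans hi') (hfirst _ hlt)
  have hu' : u'.val.2 ∈ C.getD u.val.1 ∅ := hlayer ▸ u'.prop
  exact Subtype.ext <| Prod.ext hlayer <|
    (hC.layer u).eq_of_mem u.prop hu' (mem_chans.1 hi) (mem_chans.1 hi')

lemma Vertex.exists_edge_of_not_mem_srcChans (u : Vertex C) {i : Fin n}
    (hi : i ∈ chans u.val) (hs : i ∉ srcChans C u.val) :
    ∃ (w : Vertex C) (b : Bool), Edge C b w.val u.val ∧ outChan w.val.2 b = i := by
  simp only [srcChans, Finset.mem_filter, hi, true_and, not_forall, not_not] at hs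
  obtain ⟨s, hs, hu⟩ := hs
  obtain ⟨w, b, rfl, hlt, hgap⟩ := exists_lastUse ⟨s, hs, hu⟩
  exact ⟨w, b, ⟨hlt, (mem_chans.1 hi).imp Eq.symm Eq.symm, hgap⟩, rfl⟩

lemma Edge.outChan_not_mem_srcChans {w : Vertex C} {v : ℕ × Comp n} {b : Bool}
    (he : Edge C b w.val v) : outChan w.val.2 b ∉ srcChans C v :=
  fun h => (Finset.mem_filter.1 h).2 _ he.1 (w.usedAt_outChan b)

def SinkSlot.chan (s : SinkSlot C) : {i // Used C i} :=
  ⟨outChan s.val.1.val.2 s.val.2, _, s.val.1.usedAt_outChan _⟩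

lemma SinkSlot.chan_bijective (hC : IsGenNet C) : Function.Bijective (SinkSlot.chan (C := C)) := by
  refine ⟨fun s s' h => ?_, fun ⟨i, t, ht⟩ => ?_⟩
  · have h' : outChan s'.val.1.val.2 s'.val.2 = outChan s.val.1.val.2 s.val.2 :=
      (congrArg Subtype.val h).symm
    obtain ⟨hw, hb⟩ := eq_of_lastUse hC (t := C.length) rfl h' s.val.1.layer_lt
      s'.val.1.layer_lt (fun r hr _ => s.prop r hr) (fun r hr _ => h' ▸ s'.prop r hr)
    exact Subtype.ext (Prod.ext hw hb)
  · obtain ⟨w, b, rfl, -, hgap⟩ := exists_lastUse ⟨t, ht.lt_length, ht⟩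
    exact ⟨⟨(w, b), fun r hr hu => hgap r hr hu.lt_length hu⟩, rfl⟩

noncomputable def sinkSlotEquiv (hC : IsGenNet C) : SinkSlot C ≃ {i // Used C i} :=
  Equiv.ofBijective _ (SinkSlot.chan_bijective hC)

lemma run_sinkSlotEquiv (hC : IsGenNet C) (s : SinkSlot C) (x : Fin n → Bool) :
    run C x (sinkSlotEquiv hC s) = outVal C x s.val.1.val s.val.2 := by
  rw [← stateAt_of_length_le le_rfl x]
  exact stateAt_eq_of_forall_not_usedAt s.val.1.layer_lt (fun r hr _ => s.prop r hr) x

noncomputable def InSlot.chan {v : ℕ × Comp n} (s : InSlot C v) :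
    {i // i ∈ chans v \ srcChans C v} :=
  ⟨outChan s.val.1.val.2 s.val.2,
    Finset.mem_sdiff.2 ⟨s.prop.outChan_mem_chans, s.prop.outChan_not_mem_srcChans⟩⟩

lemma InSlot.chan_bijective (hC : IsGenNet C) (v : Vertex C) :
    Function.Bijective (InSlot.chan (C := C) (v := v.val)) := by
  refine ⟨fun s s' h => ?_, fun ⟨i, hi⟩ => ?_⟩
  · have h' : outChan s'.val.1.val.2 s'.val.2 = outChan s.val.1.val.2 s.val.2 :=
      (congrArg Subtype.val h).symm
    obtain ⟨hw, hb⟩ := eq_of_lastUse hC rfl h' s.prop.1 s'.prop.1 s.prop.2.2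
      (h' ▸ s'.prop.2.2)
    exact Subtype.ext (Prod.ext hw hb)
  · obtain ⟨hc, hs⟩ := Finset.mem_sdiff.1 hi
    obtain ⟨w, b, he, rfl⟩ := v.exists_edge_of_not_mem_srcChans hc hs
    exact ⟨⟨(w, b), he⟩, rfl⟩

noncomputable def inSlotEquiv (hC : IsGenNet C) (v : Vertex C) :
    InSlot C v.val ≃ {i // i ∈ chans v.val \ srcChans C v.val} :=
  Equiv.ofBijective _ (InSlot.chan_bijective hC v)

end Slots

section GraphIso

variable {C₁ C₂ : Net n}

def PreservesEdges (f : Vertex C₁ ≃ Vertex C₂) : Prop :=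
  ∀ (b : Bool) (u v : Vertex C₁), Edge C₁ b u.val v.val ↔ Edge C₂ b (f u).val (f v).val

def MapsSrcChans (f : Vertex C₁ ≃ Vertex C₂) (g : Fin n → Fin n) : Prop :=
  ∀ u : Vertex C₁, (srcChans C₁ u.val).image g = srcChans C₂ (f u).val

namespace PreservesEdges

variable {f : Vertex C₁ ≃ Vertex C₂}

lemma symm (hf : PreservesEdges f) : PreservesEdges f.symm := fun b u v => by
  simpa using (hf b (f.symm u) (f.symm v)).symm

lemma isSink_iff (hf : PreservesEdges f) (w : Vertex C₁) (b : Bool) :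
    IsSink C₁ w.val b ↔ IsSink C₂ (f w).val b := by
  simp only [isSink_iff_forall_not_edge]
  exact f.forall_congr fun v => not_congr (hf b w v)

def inSlotEquiv (hf : PreservesEdges f) (v : Vertex C₁) :
    InSlot C₁ v.val ≃ InSlot C₂ (f v).val :=
  (f.prodCongr (Equiv.refl Bool)).subtypeEquiv fun s => hf s.2 s.1 v

def sinkSlotEquiv (hf : PreservesEdges f) : SinkSlot C₁ ≃ SinkSlot C₂ :=
  (f.prodCongr (Equiv.refl Bool)).subtypeEquiv fun s => hf.isSink_iff s.1 s.2

/-- Incoming edges, hence non-source inputs, correspond under `f`. -/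
lemma card_srcChans_eq (hC₁ : IsGenNet C₁) (hC₂ : IsGenNet C₂) (hf : PreservesEdges f)
    (u : Vertex C₁) : (srcChans C₁ u.val).card = (srcChans C₂ (f u).val).card := by
  have hin := Fintype.card_congr
    (((SN.inSlotEquiv hC₁ u).symm.trans (hf.inSlotEquiv u)).trans (SN.inSlotEquiv hC₂ (f u)))
  simp only [Fintype.card_coe] at hin
  have h₁ := Finset.card_sdiff_add_card_eq_card (srcChans_subset_chans C₁ u.val)
  have h₂ := Finset.card_sdiff_add_card_eq_card (srcChans_subset_chans C₂ (f u).val)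
  rw [card_chans hC₁] at h₁
  rw [card_chans hC₂] at h₂
  omega

lemma exists_mapsSrcChans (hC₁ : IsGenNet C₁) (hC₂ : IsGenNet C₂) (hf : PreservesEdges f) :
    ∃ g : Fin n → Fin n, MapsSrcChans f g := by
  choose σ hσ using fun u : Vertex C₁ =>
    Equiv.Perm.exists_map_finset_eq _ _ (hf.card_srcChans_eq hC₁ hC₂ u)
  refine ⟨fun i => if h : ∃ u : Vertex C₁, i ∈ srcChans C₁ u.val then σ h.choose i
    else i, fun u => ?_⟩
  rw [← hσ u, Finset.map_eq_image]
  refine Finset.image_congr fun i hi => ?_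
  have h : ∃ u : Vertex C₁, i ∈ srcChans C₁ u.val := ⟨u, hi⟩
  simp only [dif_pos h, eq_of_mem_srcChans hC₁ h.choose_spec hi, Equiv.coe_toEmbedding]

/-- By induction along the edges, `f u` on `x` and `u` on `x ∘ g` see the same set of input
values. -/
lemma outVal_comp (hC₁ : IsGenNet C₁) (hC₂ : IsGenNet C₂) (hf : PreservesEdges f)
    {g : Fin n → Fin n} (hg : MapsSrcChans f g)
    (x : Fin n → Bool) (u : Vertex C₁) (b : Bool) :
    outVal C₂ x (f u).val b = outVal C₁ (x ∘ g) u.val b := by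
  induction hk : u.val.1 using Nat.strong_induction_on generalizing u b with
  | _ k ih =>
  have hsrc : ∀ i ∈ srcChans C₁ u.val, g i ∈ srcChans C₂ (f u).val :=
    fun i hi => hg u ▸ Finset.mem_image_of_mem g hi
  refine outVal_eq_of_image_eq hC₂ hC₁ (f u) u ?_ b
  ext v
  simp only [Finset.mem_image]
  constructor
  · rintro ⟨j, hj, rfl⟩
    by_cases hs : j ∈ srcChans C₂ (f u).val
    · obtain ⟨i, hi, rfl⟩ := Finset.mem_image.1 (hg u ▸ hs)
      refine ⟨i, srcChans_subset_chans _ _ hi, ?_⟩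
      rw [stateAt_of_mem_srcChans hi, stateAt_of_mem_srcChans hs]
      rfl
    · obtain ⟨w, b', he, rfl⟩ := (f u).exists_edge_of_not_mem_srcChans hj hs
      have he₁ : Edge C₁ b' (f.symm w).val u.val := by
        simpa using (hf.symm b' w (f u)).1 he
      refine ⟨_, he₁.outChan_mem_chans, ?_⟩
      rw [he.stateAt_eq, he₁.stateAt_eq, ← ih _ (hk ▸ he₁.1) (f.symm w) b' rfl,
        f.apply_symm_apply]
  · rintro ⟨i, hi, rfl⟩
    by_cases hs : i ∈ srcChans C₁ u.val
    · refine ⟨g i, srcChans_subset_chans _ _ (hsrc i hs), ?_⟩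
      rw [stateAt_of_mem_srcChans hs, stateAt_of_mem_srcChans (hsrc i hs)]
      rfl
    · obtain ⟨w, b', he, rfl⟩ := u.exists_edge_of_not_mem_srcChans hi hs
      have he₂ := (hf b' w u).1 he
      refine ⟨_, he₂.outChan_mem_chans, ?_⟩
      rw [he.stateAt_eq, he₂.stateAt_eq, ih _ (hk ▸ he.1) w b' rfl]

noncomputable def usedEquiv (hC₁ : IsGenNet C₁) (hC₂ : IsGenNet C₂)
    (hf : PreservesEdges f) : {j // Used C₂ j} ≃ {i // Used C₁ i} :=
  (SN.sinkSlotEquiv hC₂).symm.trans (hf.sinkSlotEquiv.symm.trans (SN.sinkSlotEquiv hC₁))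

lemma run_usedEquiv (hC₁ : IsGenNet C₁) (hC₂ : IsGenNet C₂) (hf : PreservesEdges f)
    {g : Fin n → Fin n} (hg : MapsSrcChans f g)
    (x : Fin n → Bool) (j : {j // Used C₂ j}) :
    run C₂ x j = run C₁ (x ∘ g) (hf.usedEquiv hC₁ hC₂ j) := by
  obtain ⟨s, rfl⟩ := (hf.sinkSlotEquiv.trans (SN.sinkSlotEquiv hC₂)).surjective j
  simp only [usedEquiv, Equiv.trans_apply, Equiv.symm_apply_apply]
  rw [run_sinkSlotEquiv, run_sinkSlotEquiv]
  exact hf.outVal_comp hC₁ hC₂ hg x s.val.1 s.val.2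

end PreservesEdges

theorem GraphIso.exists_run_eq (hC₁ : IsGenNet C₁) (hC₂ : IsGenNet C₂)
    (h : GraphIso C₁ C₂) :
    ∃ (π : Equiv.Perm (Fin n)) (g : Fin n → Fin n),
      ∀ x, run C₂ x = permVec π (run C₁ (x ∘ g)) := by
  obtain ⟨f, hf : PreservesEdges f⟩ := h
  set σ := (hf.usedEquiv hC₁ hC₂).extendSubtype
  obtain ⟨g₀, hg₀⟩ := hf.exists_mapsSrcChans hC₁ hC₂
  -- outside the used channels, `g` undoes `σ`, which maps unused channels to unused channels
  set g : Fin n → Fin n := fun i => if Used C₁ i then g₀ i else σ.symm i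
  have hg : MapsSrcChans f g := fun u => by
    rw [← hg₀ u]
    exact Finset.image_congr fun i hi => if_pos (u.used_of_mem_srcChans hi)
  refine ⟨σ.symm, g, fun x => funext fun j => ?_⟩
  change run C₂ x j = run C₁ (x ∘ g) (σ j)
  by_cases hj : Used C₂ j
  · rw [Equiv.extendSubtype_apply_of_mem _ _ hj]
    exact hf.run_usedEquiv hC₁ hC₂ hg x ⟨j, hj⟩
  · have hσj := Equiv.extendSubtype_not_mem (hf.usedEquiv hC₁ hC₂) _ hj
    rw [run_of_not_used hj, run_of_not_used hσj]
    simp [g, hσj, σ]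

end GraphIso

theorem iso_prefix_replacement_general {n : ℕ} (C1 D C2 : Net n)
    (hC2 : IsNet C2) (hiso : GraphIso C1 C2) (hsort : IsSortingNet (C1 ++ D)) :
    ∃ D' : Net n, D'.length = D.length ∧ IsSortingNet (C2 ++ D') := by
  obtain ⟨hnet, hsorted⟩ := hsort
  have hC1 : IsNet C1 := fun L hL => hnet L (List.mem_append_left _ hL)
  have hD : IsGenNet D := fun L hL => (hnet L (List.mem_append_right _ hL)).isGenLayer
  obtain ⟨π, g, hrun⟩ := hiso.exists_run_eq hC1.isGenNet hC2.isGenNet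
  obtain ⟨D', ρ, hD', hlen, hρ⟩ := (hD.permNet π).exists_isNet
  have hnet' : IsNet (C2 ++ D') := fun L hL => (List.mem_append.1 hL).elim (hC2 L) (hD' L)
  refine ⟨D', by simp [hlen, permNet], isSortingNet_of_forall_run_eq_permVec hnet' (ρ * π)
    fun x => ⟨_, hsorted (x ∘ g), ?_⟩⟩
  rw [run_append, run_append, hrun, hρ, run_permNet hD, permVec_mul]

/-- Choi & Moon: if `C1;D` is a sorting network, `C2` is a
comparator network of the same depth as `C1`, and `G(C1) ≈ G(C2)`, then there
is `D'` of the same depth as `D` with `C2;D'` a sorting network. -/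
theorem iso_prefix_replacement {n : ℕ} (C1 D C2 : Net n)
    (hC2 : IsNet C2) (hdepth : C1.length = C2.length)
    (hiso : GraphIso C1 C2) (hsort : IsSortingNet (C1 ++ D)) :
    ∃ D' : Net n, D'.length = D.length ∧ IsSortingNet (C2 ++ D') :=
  iso_prefix_replacement_general C1 D C2 hC2 hiso hsort

end SN
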